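/- arXiv:2210.00039 — 2 statements merged into one kernel-verified Lean document; each statement's English description precedes it below -/
import Mathlib

section
/- If G is a connected chordal graph, then the subgraph induced by the center C(G) is connected. -/
open SimpleGraph

variable {V : Type*}

noncomputable instance (priority := low) instFintypeSubsetOfFinite [Finite V] (s : Set V) :
    Fintype ↥s := Fintype.ofFinite _

/-- Eccentricity of a vertex: max distance to any vertex. -/
noncomputable def ecc [Fintype V] (G : SimpleGraph V) (x : V) : ℕ :=
  Finset.univ.sup (G.dist x)

/-- Radius: minimum eccentricity. -/
noncomputable def grad [Fintype V] (G : SimpleGraph V) : ℕ :=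
  sInf (Set.range (ecc G))

/-- Diameter: maximum eccentricity. -/
noncomputable def gdiam [Fintype V] (G : SimpleGraph V) : ℕ :=
  Finset.univ.sup (ecc G)

/-- The center: vertices of minimum eccentricity. -/
def center [Fintype V] (G : SimpleGraph V) : Set V :=
  {x | ecc G x = grad G}

/-- `G` has an induced cycle of length `n`. -/
def HasInducedCycle (G : SimpleGraph V) (n : ℕ) : Prop :=
  3 ≤ n ∧ ∃ f : ZMod n → V, Function.Injective f ∧
    ∀ i j : ZMod n, G.Adj (f i) (f j) ↔ (i = j + 1 ∨ j = i + 1)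

/-- `G` is `k`-chordal: no induced cycle of length greater than `k`. -/
def KChordal (G : SimpleGraph V) (k : ℕ) : Prop :=
  ∀ n, k < n → ¬ HasInducedCycle G n

/-!
In a chordal graph every disk `{w | d(z, w) ≤ k}` is geodesically convex. If a shortest
`u`-`v` path left the disk, take a maximal stretch of it outside the disk, with ends `x`, `y`
in the disk. Shortest paths from `z` to `x` and to `y` contain an induced `x`-`y` path whose
interior lies strictly inside the disk, hence is non-adjacent to the stretch; the two paths
have length at least `d(x, y) ≥ 2` and close up to an induced cycle of length at least four.
The center is the intersection of the disks of radius `grad G` around all vertices, so it is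
convex, and a convex set spans a connected subgraph.
-/

lemma Nat.exists_maximal_run_not {P : ℕ → Prop} [DecidablePred P] {t L : ℕ} (h0 : P 0)
    (hL : P L) (ht : ¬ P t) (htL : t ≤ L) :
    ∃ a b, a < t ∧ t < b ∧ b ≤ L ∧ P a ∧ P b ∧ ∀ s, a < s → s < b → ¬ P s := by
  have hex : ∃ s, t ≤ s ∧ P s := ⟨L, htL, hL⟩
  have ha : P (Nat.findGreatest P t) := Nat.findGreatest_spec (Nat.zero_le t) h0
  have hb := Nat.find_spec hex
  refine ⟨Nat.findGreatest P t, Nat.find hex, ?_, ?_, Nat.find_min' hex ⟨htL, hL⟩, ha, hb.2,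
    fun s has hsb hs => ?_⟩
  · exact (Nat.findGreatest_le t).lt_of_ne fun h => ht (h ▸ ha)
  · exact hb.1.lt_of_ne fun h => ht (h ▸ hb.2)
  · rcases le_or_gt s t with hst | hts
    · exact Nat.findGreatest_is_greatest has hst hs
    · exact Nat.find_min hex hsb ⟨hts.le, hs⟩

namespace SimpleGraph

variable {G : SimpleGraph V}

/-- The vertices `f 0, …, f m` are distinct and form an induced path in this order. -/
def IsInducedPath (G : SimpleGraph V) (f : ℕ → V) (m : ℕ) : Prop :=
  Set.InjOn f (Set.Iic m) ∧
    ∀ i ≤ m, ∀ j ≤ m, G.Adj (f i) (f j) ↔ i + 1 = j ∨ j + 1 = i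

lemma IsInducedPath.reflect {f : ℕ → V} {m a b : ℕ} (h : IsInducedPath G f m) (hab : a ≤ b)
    (hbm : b ≤ m) : IsInducedPath G (fun s => f (b - s)) (b - a) := by
  refine ⟨fun i hi j hj hij => ?_, fun i hi j hj => ?_⟩
  · simp only [Set.mem_Iic] at hi hj
    have := h.1 (Set.mem_Iic.2 (by omega)) (Set.mem_Iic.2 (by omega)) hij
    omega
  · rw [h.2 _ (by omega) _ (by omega)]
    omega

lemma hasInducedCycle_of_forall_lt {n : ℕ} (hn : 3 ≤ n) (c : ℕ → V)
    (hc : ∀ s t, s < t → t < n →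
      c s ≠ c t ∧ (G.Adj (c s) (c t) ↔ s + 1 = t ∨ (s = 0 ∧ t + 1 = n))) :
    HasInducedCycle G n := by
  have : NeZero n := ⟨by omega⟩
  have val_eq_add_one (i j : ZMod n) :
      i = j + 1 ↔ i.val = if j.val + 1 = n then 0 else j.val + 1 := by
    have hone : (1 : ZMod n).val = 1 := ZMod.val_one_eq_one_mod n ▸ Nat.mod_eq_of_lt (by omega)
    rw [← (ZMod.val_injective n).eq_iff, ZMod.val_add, hone]
    have := j.val_lt
    split_ifs with h
    · rw [h, Nat.mod_self]
    · rw [Nat.mod_eq_of_lt (by omega)]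
  refine ⟨hn, fun i => c i.val, fun i j hij => ?_, fun i j => ?_⟩
  · by_contra hne
    rcases Nat.lt_or_gt_of_ne ((ZMod.val_injective n).ne hne) with h | h
    · exact (hc _ _ h j.val_lt).1 hij
    · exact (hc _ _ h i.val_lt).1 hij.symm
  · rw [val_eq_add_one, val_eq_add_one]
    have hi := i.val_lt
    have hj := j.val_lt
    rcases lt_trichotomy i.val j.val with h | h | h
    · rw [(hc _ _ h hj).2]; split_ifs <;> omega
    · rw [(ZMod.val_injective n) h]
      simp only [SimpleGraph.irrefl, false_iff]
      split_ifs <;> omega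
    · rw [adj_comm, (hc _ _ h hi).2]; split_ifs <;> omega

lemma IsInducedPath.hasInducedCycle_glue {f g : ℕ → V} {m l : ℕ} (hf : IsInducedPath G f m)
    (hg : IsInducedPath G g l) (hm : 2 ≤ m) (hl : 2 ≤ l) (hfg : f m = g 0) (hgf : g l = f 0)
    (hint : ∀ i j, 0 < i → i < m → 0 < j → j < l → f i ≠ g j ∧ ¬ G.Adj (f i) (g j)) :
    HasInducedCycle G (m + l) := by
  set c : ℕ → V := fun s => if s ≤ m then f s else g (s - m)
  have hcf : ∀ s ≤ m, c s = f s := fun s hs => if_pos hs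
  have hcg : ∀ s, m ≤ s → c s = g (s - m) := fun s hs => by
    rcases hs.eq_or_lt with rfl | hs
    · simp [c, hfg]
    · exact if_neg (by omega)
  refine hasInducedCycle_of_forall_lt (by omega) c fun s t hst htn => ?_
  rcases le_or_gt t m with htm | hmt
  · rw [hcf s (by omega), hcf t htm, hf.2 _ (by omega) _ htm]
    exact ⟨fun h => by have := hf.1 (Set.mem_Iic.2 (by omega)) (Set.mem_Iic.2 htm) h; omega,
      by omega⟩
  rcases le_or_gt m s with hms | hsm
  · rw [hcg s hms, hcg t hmt.le, hg.2 _ (by omega) _ (by omega)]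
    exact ⟨fun h => by
      have := hg.1 (Set.mem_Iic.2 (by omega)) (Set.mem_Iic.2 (by omega)) h; omega, by omega⟩
  rw [hcf s hsm.le, hcg t hmt.le]
  rcases Nat.eq_zero_or_pos s with rfl | hs
  · rw [← hgf, hg.2 _ le_rfl _ (by omega)]
    exact ⟨fun h => by
      have := hg.1 (Set.mem_Iic.2 le_rfl) (Set.mem_Iic.2 (by omega)) h; omega, by omega⟩
  · obtain ⟨hne, hnadj⟩ := hint s (t - m) hs hsm (by omega) (by omega)
    exact ⟨hne, by simp only [hnadj, false_iff]; omega⟩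

namespace Walk

variable {u v : V}

lemma dist_start_getVert_of_length_eq_dist {p : G.Walk u v} (hp : p.length = G.dist u v)
    {i : ℕ} (hi : i ≤ p.length) : G.dist u (p.getVert i) = i := by
  have hstart : G.dist u (p.getVert i) ≤ i := by
    simpa [hi] using dist_le (p.take i)
  have hend : G.dist (p.getVert i) v ≤ p.length - i := by
    simpa using dist_le (p.drop i)
  have := (p.take i).reachable.dist_triangle_left v
  omega

lemma le_dist_getVert_of_length_eq_dist {p : G.Walk u v} (hp : p.length = G.dist u v)
    {i j : ℕ} (hij : i ≤ j) (hj : j ≤ p.length) :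
    j - i ≤ G.dist (p.getVert i) (p.getVert j) := by
  have := (p.take i).reachable.dist_triangle_left (p.getVert j)
  rw [dist_start_getVert_of_length_eq_dist hp (hij.trans hj),
    dist_start_getVert_of_length_eq_dist hp hj] at this
  omega

lemma isInducedPath_of_length_eq_dist {p : G.Walk u v} (hp : p.length = G.dist u v) :
    IsInducedPath G p.getVert p.length := by
  have key : ∀ i j, i < j → j ≤ p.length →
      p.getVert i ≠ p.getVert j ∧ (G.Adj (p.getVert i) (p.getVert j) ↔ i + 1 = j) := by
    intro i j hij hj
    have hd := le_dist_getVert_of_length_eq_dist hp hij.le hj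
    refine ⟨fun h => by rw [h, dist_self] at hd; omega, fun hadj => ?_, ?_⟩
    · rw [dist_eq_one_iff_adj.2 hadj] at hd; omega
    · rintro rfl; exact p.adj_getVert_succ (by omega)
  refine ⟨fun i hi j hj h => ?_, fun i hi j hj => ?_⟩
  · rw [Set.mem_Iic] at hi hj
    by_contra hne
    rcases Nat.lt_or_gt_of_ne hne with hlt | hlt
    · exact (key i j hlt hj).1 h
    · exact (key j i hlt hi).1 h.symm
  · rcases lt_trichotomy i j with hlt | rfl | hlt
    · rw [(key i j hlt hj).2]; omega
    · simp
    · rw [adj_comm, (key j i hlt hi).2]; omega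

lemma dist_lt_of_mem_support_of_length_eq_dist {p : G.Walk u v} (hp : p.length = G.dist u v)
    {y : V} (hy : y ∈ p.support) (hyv : y ≠ v) : G.dist u y < G.dist u v := by
  obtain ⟨i, rfl, hi⟩ := mem_support_iff_exists_getVert.1 hy
  rw [dist_start_getVert_of_length_eq_dist hp hi, ← hp]
  refine hi.lt_of_ne fun h => hyv ?_
  rw [h, getVert_length]

lemma dist_lt_of_mem_support_reverse_append {z w : V} {P : G.Walk z u} {Q : G.Walk z v}
    (hP : P.length = G.dist z u) (hQ : Q.length = G.dist z v)
    (hw : w ∈ (P.reverse.append Q).support) (hwu : w ≠ u) (hwv : w ≠ v) :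
    G.dist z w < G.dist z u ∨ G.dist z w < G.dist z v := by
  rcases (mem_support_append_iff _ _).1 hw with hw | hw
  · rw [support_reverse, List.mem_reverse] at hw
    exact .inl (dist_lt_of_mem_support_of_length_eq_dist hP hw hwu)
  · exact .inr (dist_lt_of_mem_support_of_length_eq_dist hQ hw hwv)

lemma exists_shorter_of_adj_getVert (p : G.Walk u v) {i j : ℕ} (hij : i + 1 < j)
    (hj : j ≤ p.length) (hadj : G.Adj (p.getVert i) (p.getVert j)) :
    ∃ q : G.Walk u v, q.length < p.length ∧ q.support ⊆ p.support := by
  refine ⟨(p.take i).append (cons hadj (p.drop j)), by simp; omega, ?_⟩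
  rw [support_append, support_cons, List.tail_cons]
  exact List.append_subset.2 ⟨(p.isSubwalk_take i).support_subset,
    (p.isSubwalk_drop j).support_subset⟩

lemma exists_isInducedPath_support_subset (p : G.Walk u v) :
    ∃ q : G.Walk u v, q.support ⊆ p.support ∧ IsInducedPath G q.getVert q.length := by
  classical
  induction h : p.length using Nat.strong_induction_on generalizing p with
  | _ n ih =>
  by_cases hchord : ∃ i j, i + 1 < j ∧ j ≤ p.bypass.length ∧
      G.Adj (p.bypass.getVert i) (p.bypass.getVert j)
  · obtain ⟨i, j, hij, hj, hadj⟩ := hchord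
    obtain ⟨q, hlen, hsub⟩ := p.bypass.exists_shorter_of_adj_getVert hij hj hadj
    obtain ⟨r, hr, hind⟩ := ih _ (h ▸ hlen.trans_le p.length_bypass_le_length) q rfl
    exact ⟨r, List.Subset.trans hr (List.Subset.trans hsub p.support_bypass_subset_support),
      hind⟩
  push Not at hchord
  refine ⟨p.bypass, p.support_bypass_subset_support, p.bypass_isPath.getVert_injOn,
    fun i hi j hj => ⟨fun hadj => ?_, ?_⟩⟩
  · by_contra hcons
    rcases lt_trichotomy i j with hlt | rfl | hlt
    · exact hchord i j (by omega) hj hadj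
    · exact hadj.ne rfl
    · exact hchord j i (by omega) hi hadj.symm
  · rintro (rfl | rfl)
    · exact p.bypass.adj_getVert_succ (by omega)
    · exact (p.bypass.adj_getVert_succ (by omega)).symm

end Walk

lemma KChordal.dist_getVert_le {u v z : V} {k : ℕ} (hch : KChordal G 3) {p : G.Walk u v}
    (hp : p.length = G.dist u v) (hu : G.dist z u ≤ k) (hv : G.dist z v ≤ k) (i : ℕ) :
    G.dist z (p.getVert i) ≤ k := by
  by_contra! hi
  have hiL : i ≤ p.length := by
    by_contra! h
    rw [p.getVert_of_length_le h.le] at hi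
    omega
  obtain ⟨a, b, hai, hib, hbL, ha, hb, hrun⟩ :=
    Nat.exists_maximal_run_not (P := fun s => G.dist z (p.getVert s) ≤ k)
      (by simpa using hu) (by simpa using hv) hi.not_ge hiL
  simp only [not_le] at hrun
  have hreach : ∀ s, G.Reachable z (p.getVert s) := fun s =>
    (Reachable.of_dist_ne_zero (by omega : G.dist z (p.getVert i) ≠ 0)).trans
      ((p.drop i).reachable.trans (p.drop s).reachable.symm)
  obtain ⟨P, hP⟩ := (hreach a).exists_walk_length_eq_dist
  obtain ⟨Q, hQ⟩ := (hreach b).exists_walk_length_eq_dist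
  obtain ⟨R, hRsub, hR⟩ := (P.reverse.append Q).exists_isInducedPath_support_subset
  have hab : a ≤ b := by omega
  have hba : b - a ≤ R.length :=
    (Walk.le_dist_getVert_of_length_eq_dist hp hab hbL).trans (dist_le R)
  have hRint : ∀ s, 0 < s → s < R.length → G.dist z (R.getVert s) < k := by
    intro s hs hsR
    have := Walk.dist_lt_of_mem_support_reverse_append hP hQ (hRsub (R.getVert_mem_support s))
      (fun h => hs.ne' (hR.1 (by simp [hsR.le]) (by simp) (h.trans R.getVert_zero.symm)))
      (fun h => hsR.ne (hR.1 (by simp [hsR.le]) (by simp) (h.trans R.getVert_length.symm)))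
    omega
  -- `R` followed by the stretch `p.getVert b, …, p.getVert a` is an induced cycle
  refine hch _ (by omega) (hR.hasInducedCycle_glue
    ((Walk.isInducedPath_of_length_eq_dist hp).reflect hab hbL)
    (by omega) (by omega) (by simp) (by simp [Nat.sub_sub_self hab])
    fun s j hs hsR hj hjb => ?_)
  have hRs := hRint s hs hsR
  have hpj := hrun (b - j) (by omega) (by omega)
  refine ⟨fun h => by simp only [← h] at hpj; omega, fun hadj => ?_⟩
  rcases hadj.diff_dist_adj (u := z) with h | h | h <;> omega

end SimpleGraph

lemma mem_center_iff_forall_dist_le [Fintype V] {G : SimpleGraph V} {x : V} :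
    x ∈ _root_.center G ↔ ∀ z, G.dist x z ≤ grad G := by
  have hle : grad G ≤ ecc G x := Nat.sInf_le ⟨x, rfl⟩
  have hsup : ecc G x ≤ grad G ↔ ∀ z, G.dist x z ≤ grad G := by simp [ecc]
  rw [← hsup]
  exact ⟨le_of_eq, fun h => h.antisymm hle⟩

lemma SimpleGraph.KChordal.mem_center_of_mem_support [Fintype V] {G : SimpleGraph V}
    (hch : KChordal G 3) {x y w : V} (hx : x ∈ _root_.center G) (hy : y ∈ _root_.center G)
    {p : G.Walk x y} (hp : p.length = G.dist x y) (hw : w ∈ p.support) :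
    w ∈ _root_.center G := by
  obtain ⟨i, rfl, -⟩ := Walk.mem_support_iff_exists_getVert.1 hw
  refine mem_center_iff_forall_dist_le.2 fun z => ?_
  rw [dist_comm]
  exact hch.dist_getVert_le hp (dist_comm.trans_le (mem_center_iff_forall_dist_le.1 hx z))
    (dist_comm.trans_le (mem_center_iff_forall_dist_le.1 hy z)) i

theorem center_connected [Fintype V] (G : SimpleGraph V) (hG : G.Connected)
    (hch : KChordal G 3) : (G.induce (_root_.center G)).Connected := by
  have : Nonempty V := hG.nonempty
  obtain ⟨x₀, hx₀⟩ : ∃ x, ecc G x = grad G := Nat.sInf_mem (Set.range_nonempty (ecc G))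
  rw [connected_iff]
  refine ⟨fun ⟨x, hx⟩ ⟨y, hy⟩ => ?_, ⟨⟨x₀, hx₀⟩⟩⟩
  obtain ⟨p, hp⟩ := hG.exists_walk_length_eq_dist x y
  exact (p.induce _ fun w => hch.mem_center_of_mem_support hx hy hp).reachable
end

section
/- Let G be a connected chordal graph with Diam(G) ≤ 3 such that the induced subgraph on C(G) is self-centered with radius 2. Then G is the center of some chordal graph; specifically, adding a new pendant vertex wᵢ adjacent to each vertex aᵢ of eccentricity 2 yields a chordal graph G′ whose center is exactly V(G). -/
open SimpleGraph

variable {V : Type*}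

/-- `G` with a new pendant vertex attached to each vertex of eccentricity two. -/
def pendant [Fintype V] (G : SimpleGraph V) :
    SimpleGraph (V ⊕ {a : V // ecc G a = 2}) :=
  SimpleGraph.fromRel (fun x y => match x, y with
    | Sum.inl a, Sum.inl b => G.Adj a b
    | Sum.inl a, Sum.inr w => w.1 = a
    | _, _ => False)

/-! A vertex on an induced cycle has two distinct neighbours on it, so the new degree-one vertices
lie on no induced cycle and `pendant G` stays chordal. In `pendant G` the distances between old
vertices are those of `G`, and a pendant vertex is one step further than its anchor. The hypothesis
on `⟨C(G)⟩` forces `Rad(G) = 2` and gives every vertex `a` of eccentricity two a partner `b` of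
eccentricity two with `d(a, b) = 2`. Hence every old vertex has eccentricity `3` in `pendant G`
(through `w_b` when `ecc a = 2`, directly when `ecc a = 3`), while `d(w_a, w_b) = 4`. -/

namespace SimpleGraph

variable {V W : Type*} {G : SimpleGraph V} {H : SimpleGraph W}

theorem Walk.exists_length_le_of_adj_or_eq (f : V → W)
    (hf : ∀ x y, G.Adj x y → f x = f y ∨ H.Adj (f x) (f y)) {u v : V} (p : G.Walk u v) :
    ∃ q : H.Walk (f u) (f v), q.length ≤ p.length := by
  induction p with
  | nil => exact ⟨.nil, le_rfl⟩
  | cons h p ih =>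
    obtain ⟨q, hq⟩ := ih
    rcases hf _ _ h with heq | hadj
    · exact ⟨q.copy heq.symm rfl, by rw [Walk.length_copy, Walk.length_cons]; omega⟩
    · exact ⟨.cons hadj q, by simp [hq]⟩

theorem Reachable.dist_le_of_adj_or_eq (f : V → W)
    (hf : ∀ x y, G.Adj x y → f x = f y ∨ H.Adj (f x) (f y)) {u v : V} (h : G.Reachable u v) :
    H.dist (f u) (f v) ≤ G.dist u v := by
  obtain ⟨p, hp⟩ := h.exists_walk_length_eq_dist
  obtain ⟨q, hq⟩ := p.exists_length_le_of_adj_or_eq f hf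
  exact (dist_le q).trans (hp ▸ hq)

theorem Reachable.dist_map_le (f : G →g H) {u v : V} (h : G.Reachable u v) :
    H.dist (f u) (f v) ≤ G.dist u v :=
  h.dist_le_of_adj_or_eq f fun _ _ hxy => .inr (f.map_adj hxy)

theorem Connected.dist_eq_dist_add_one_of_unique_neighbor (hG : G.Connected) {u v w : V}
    (huv : G.Adj u v) (hv : ∀ x, G.Adj x v → x = u) (hw : v ≠ w) :
    G.dist v w = G.dist u w + 1 := by
  apply le_antisymm
  · have := (hG v u).dist_triangle_left w
    have huv' : G.dist v u = 1 := dist_eq_one_iff_adj.mpr huv.symm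
    omega
  · obtain ⟨p, hp⟩ := hG.exists_walk_length_eq_dist v w
    cases p with
    | nil => exact absurd rfl hw
    | cons h q =>
      obtain rfl := hv _ h.symm
      rw [← hp, Walk.length_cons]
      exact Nat.add_le_add_right (dist_le q) 1

end SimpleGraph

section Eccentricity

variable {V : Type*} [Fintype V] {G : SimpleGraph V}

theorem dist_le_ecc (x y : V) : G.dist x y ≤ ecc G x :=
  Finset.le_sup (Finset.mem_univ y)

theorem ecc_le_gdiam (x : V) : ecc G x ≤ gdiam G :=
  Finset.le_sup (Finset.mem_univ x)

theorem grad_le_ecc (x : V) : grad G ≤ ecc G x :=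
  Nat.sInf_le ⟨x, rfl⟩

theorem exists_ecc_eq_grad [Nonempty V] : ∃ x, ecc G x = grad G :=
  Nat.sInf_mem (Set.range_nonempty _)

theorem exists_le_dist_of_le_ecc {x : V} {n : ℕ} (hn : 0 < n) (h : n ≤ ecc G x) :
    ∃ y, n ≤ G.dist x y := by
  obtain ⟨y, -, hy⟩ := (Finset.le_sup_iff hn).mp h
  exact ⟨y, hy⟩

theorem center_eq_of_ecc {s : Set V} {r : ℕ} (hs : s.Nonempty) (hin : ∀ x ∈ s, ecc G x = r)
    (hout : ∀ x ∉ s, r < ecc G x) : _root_.center G = s := by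
  have hr : grad G = r := by
    obtain ⟨x₀, hx₀⟩ := hs
    obtain ⟨y, hy⟩ : ∃ y, ecc G y = grad G := @exists_ecc_eq_grad _ _ _ ⟨x₀⟩
    apply le_antisymm ((grad_le_ecc x₀).trans_eq (hin x₀ hx₀))
    by_cases hys : y ∈ s
    · exact (hin y hys).symm.trans_le hy.le
    · exact ((hout y hys).trans_eq hy).le
  ext x
  change ecc G x = grad G ↔ x ∈ s
  by_cases hx : x ∈ s
  · simp only [hr, hin x hx, hx]
  · simpa only [hr, hx, iff_false] using (hout x hx).ne'

theorem exists_two_le_dist_of_two_le_ecc_induce (hG : G.Connected) {s : Set V} (x : s)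
    (hx : 2 ≤ ecc (G.induce s) x) : ∃ y ∈ s, 2 ≤ G.dist x y := by
  obtain ⟨y, hy⟩ := exists_le_dist_of_le_ecc two_pos hx
  have hne : x.1 ≠ y.1 := fun h => by
    rw [Subtype.ext h, SimpleGraph.dist_self] at hy
    omega
  have hnadj : ¬ G.Adj x y := fun h => by
    rw [show (G.induce s).dist x y = 1 from SimpleGraph.dist_eq_one_iff_adj.mpr h] at hy
    omega
  exact ⟨y, y.2, hG.one_lt_dist_of_ne_of_not_adj hne hnadj⟩

theorem ecc_le_ecc_induce_of_forall_mem (hG : G.Connected) {s : Set V} (hs : ∀ x, x ∈ s)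
    (x : s) : ecc G x ≤ ecc (G.induce s) x := by
  let lift : G →g G.induce s := ⟨fun y => ⟨y, hs y⟩, id⟩
  refine Finset.sup_le fun y _ => ?_
  calc G.dist x y
      ≤ (G.induce s).dist x (lift y) :=
        ((hG x y).map lift).dist_map_le (SimpleGraph.Embedding.induce s).toHom
    _ ≤ ecc (G.induce s) x := dist_le_ecc _ _

end Eccentricity

section SelfCenteredCenter

variable {V : Type*} [Fintype V] {G : SimpleGraph V}

theorem grad_eq_two (hG : G.Connected) (hd : gdiam G ≤ 3)
    (hsc : ∀ x : ↥(_root_.center G), ecc (G.induce (_root_.center G)) x = 2) : grad G = 2 := by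
  have := hG.nonempty
  obtain ⟨c, hc⟩ := exists_ecc_eq_grad (G := G)
  obtain ⟨b, -, hb⟩ := exists_two_le_dist_of_two_le_ecc_induce hG ⟨c, hc⟩ (hsc ⟨c, hc⟩).ge
  have h2 : 2 ≤ grad G := hc ▸ hb.trans (dist_le_ecc c b)
  by_contra hne
  have h3 : grad G = 3 := by have := (ecc_le_gdiam c).trans hd; omega
  -- with `Rad(G) = 3 ≥ Diam(G)` the center is all of `V`, so `⟨C(G)⟩` is `G` itself
  have hall : ∀ x, x ∈ _root_.center G := fun x =>
    le_antisymm ((ecc_le_gdiam x).trans (hd.trans_eq h3.symm)) (grad_le_ecc x)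
  have := ecc_le_ecc_induce_of_forall_mem hG hall ⟨c, hc⟩
  rw [hsc, hc] at this
  omega

theorem exists_ecc_eq_two_dist_eq_two (hG : G.Connected) (hd : gdiam G ≤ 3)
    (hsc : ∀ x : ↥(_root_.center G), ecc (G.induce (_root_.center G)) x = 2) {a : V}
    (ha : ecc G a = 2) : ∃ b, ecc G b = 2 ∧ G.dist a b = 2 := by
  have hgrad := grad_eq_two hG hd hsc
  have hmem : a ∈ _root_.center G := ha.trans hgrad.symm
  obtain ⟨b, hb, hab⟩ :=
    exists_two_le_dist_of_two_le_ecc_induce hG ⟨a, hmem⟩ (hsc ⟨a, hmem⟩).ge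
  exact ⟨b, hb.trans hgrad, le_antisymm (ha ▸ dist_le_ecc a b) hab⟩

end SelfCenteredCenter

theorem KChordal.of_embedding {V W : Type*} {G : SimpleGraph V} {H : SimpleGraph W} {k : ℕ}
    (e : G ↪g H) (hG : KChordal G k)
    (hdeg : ∀ w ∉ Set.range e, ∀ x y, H.Adj x w → H.Adj y w → x = y) : KChordal H k := by
  rintro n hn ⟨hn3, f, hinj, hadj⟩
  have hmem : ∀ i, f i ∈ Set.range e := fun i => by
    by_contra hi
    have h : i + 1 = i - 1 := hinj <| hdeg _ hi _ _
      ((hadj _ _).mpr (.inl rfl)) ((hadj _ _).mpr (.inr (sub_add_cancel i 1).symm))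
    have h2 : ((2 : ℕ) : ZMod n) = 0 := by
      linear_combination h
    exact absurd (Nat.le_of_dvd two_pos ((ZMod.natCast_eq_zero_iff 2 n).mp h2)) (by omega)
  choose g hg using hmem
  refine hG n hn ⟨hn3, g, fun i j hij => hinj ?_, fun i j => ?_⟩
  · rw [← hg i, ← hg j, hij]
  · rw [← e.map_adj_iff, hg, hg, hadj]

section Pendant

variable {V : Type*} [Fintype V] {G : SimpleGraph V}

theorem pendant_adj_inl_inl {a b : V} :
    (pendant G).Adj (Sum.inl a) (Sum.inl b) ↔ G.Adj a b := by
  constructor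
  · rintro ⟨-, h | h⟩
    · exact h
    · exact h.symm
  · exact fun h => ⟨by simp [h.ne], Or.inl h⟩

theorem pendant_adj_inl_inr {a : V} {w : {a : V // ecc G a = 2}} :
    (pendant G).Adj (Sum.inl a) (Sum.inr w) ↔ w.1 = a := by
  constructor
  · rintro ⟨-, h | h⟩
    · exact h
    · exact h.elim
  · exact fun h => ⟨by simp, Or.inl h⟩

theorem pendant_adj_inr_iff {x : V ⊕ {a : V // ecc G a = 2}} {w : {a : V // ecc G a = 2}} :
    (pendant G).Adj x (Sum.inr w) ↔ x = Sum.inl w.1 := by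
  rcases x with a | w'
  · rw [pendant_adj_inl_inr, eq_comm, Sum.inl.injEq]
  · simp only [reduceCtorEq, iff_false]
    rintro ⟨-, h | h⟩ <;> exact h

def pendantInl (G : SimpleGraph V) : G ↪g pendant G where
  toFun := Sum.inl
  inj' := Sum.inl_injective
  map_rel_iff' := pendant_adj_inl_inl

theorem pendant_connected (hG : G.Connected) : (pendant G).Connected := by
  have := hG.nonempty
  have hinl : ∀ a b, (pendant G).Reachable (Sum.inl a) (Sum.inl b) := fun a b =>
    (hG a b).map (pendantInl G).toHom
  have hinr : ∀ x, ∃ a, (pendant G).Reachable x (Sum.inl a) := by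
    rintro (a | w)
    · exact ⟨a, .rfl⟩
    · exact ⟨w.1, (pendant_adj_inr_iff.mpr rfl).reachable.symm⟩
  refine ⟨fun x y => ?_⟩
  obtain ⟨a, ha⟩ := hinr x
  obtain ⟨b, hb⟩ := hinr y
  exact ha.trans ((hinl a b).trans hb.symm)

theorem pendant_dist_inl_inl (hG : G.Connected) (a b : V) :
    (pendant G).dist (Sum.inl a) (Sum.inl b) = G.dist a b := by
  apply le_antisymm ((hG a b).dist_map_le (pendantInl G).toHom)
  -- collapsing every pendant edge onto its anchor does not increase distances
  refine (pendant_connected hG (Sum.inl a) (Sum.inl b)).dist_le_of_adj_or_eq (H := G) (Sum.elim id Subtype.val) ?_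
  rintro (x | w) (y | w') h
  · exact .inr (pendant_adj_inl_inl.mp h)
  · exact .inl (pendant_adj_inl_inr.mp h).symm
  · exact .inl (pendant_adj_inl_inr.mp h.symm)
  · exact absurd (pendant_adj_inr_iff.mp h) (by simp)

theorem pendant_dist_inr_inl (hG : G.Connected) (w : {a : V // ecc G a = 2}) (a : V) :
    (pendant G).dist (Sum.inr w) (Sum.inl a) = G.dist w.1 a + 1 := by
  rw [(pendant_connected hG).dist_eq_dist_add_one_of_unique_neighbor
      (pendant_adj_inr_iff.mpr rfl) (fun _ => pendant_adj_inr_iff.mp) (by simp),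
    pendant_dist_inl_inl hG]

theorem pendant_dist_inr_inr (hG : G.Connected) {w w' : {a : V // ecc G a = 2}} (hne : w ≠ w') :
    (pendant G).dist (Sum.inr w) (Sum.inr w') = G.dist w.1 w'.1 + 2 := by
  rw [(pendant_connected hG).dist_eq_dist_add_one_of_unique_neighbor
      (pendant_adj_inr_iff.mpr rfl) (fun _ => pendant_adj_inr_iff.mp) (by simpa using hne),
    SimpleGraph.dist_comm, pendant_dist_inr_inl hG, SimpleGraph.dist_comm]

theorem kChordal_pendant {k : ℕ} (hG : KChordal G k) : KChordal (pendant G) k :=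
  hG.of_embedding (pendantInl G) <| by
    rintro (a | w) ha x y hx hy
    · exact absurd ⟨a, rfl⟩ ha
    · rw [pendant_adj_inr_iff.mp hx, pendant_adj_inr_iff.mp hy]

variable (hG : G.Connected) (hd : gdiam G ≤ 3)
  (hsc : ∀ x : ↥(_root_.center G), ecc (G.induce (_root_.center G)) x = 2)
include hG hd hsc

theorem ecc_pendant_inl (v : V) : ecc (pendant G) (Sum.inl v) = 3 := by
  have hv : ecc G v ≤ 3 := (ecc_le_gdiam v).trans hd
  apply le_antisymm
  · refine Finset.sup_le ?_
    rintro (b | w) -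
    · exact (pendant_dist_inl_inl hG v b).trans_le ((dist_le_ecc v b).trans hv)
    · have := w.2 ▸ dist_le_ecc (G := G) w.1 v
      rw [SimpleGraph.dist_comm, pendant_dist_inr_inl hG]
      omega
  · by_cases h2 : ecc G v = 2
    · obtain ⟨b, hb, hvb⟩ := exists_ecc_eq_two_dist_eq_two hG hd hsc h2
      calc 3 = (pendant G).dist (Sum.inl v) (Sum.inr ⟨b, hb⟩) := by
            rw [SimpleGraph.dist_comm, pendant_dist_inr_inl hG, SimpleGraph.dist_comm, hvb]
        _ ≤ _ := dist_le_ecc _ _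
    · have := grad_eq_two hG hd hsc ▸ grad_le_ecc (G := G) v
      obtain ⟨b, hb⟩ := exists_le_dist_of_le_ecc (G := G) three_pos (by omega : 3 ≤ ecc G v)
      calc 3 ≤ G.dist v b := hb
        _ = (pendant G).dist (Sum.inl v) (Sum.inl b) := (pendant_dist_inl_inl hG v b).symm
        _ ≤ _ := dist_le_ecc _ _

theorem four_le_ecc_pendant_inr (w : {a : V // ecc G a = 2}) :
    4 ≤ ecc (pendant G) (Sum.inr w) := by
  obtain ⟨b, hb, hwb⟩ := exists_ecc_eq_two_dist_eq_two hG hd hsc w.2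
  have hne : w ≠ ⟨b, hb⟩ := fun h => by subst h; simp at hwb
  calc 4 = (pendant G).dist (Sum.inr w) (Sum.inr ⟨b, hb⟩) := by
        rw [pendant_dist_inr_inr hG hne, hwb]
    _ ≤ _ := dist_le_ecc _ _

end Pendant

theorem pendant_center [Fintype V] (G : SimpleGraph V) (hG : G.Connected)
    (hch : KChordal G 3) (hd : gdiam G ≤ 3)
    (hsc : ∀ x : ↥(_root_.center G), ecc (G.induce (_root_.center G)) x = 2) :
    KChordal (pendant G) 3 ∧ _root_.center (pendant G) = Set.range Sum.inl := by
  refine ⟨kChordal_pendant hch, center_eq_of_ecc (r := 3) ?_ ?_ ?_⟩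
  · obtain ⟨v⟩ := hG.nonempty
    exact ⟨Sum.inl v, v, rfl⟩
  · rintro _ ⟨v, rfl⟩
    exact ecc_pendant_inl hG hd hsc v
  · rintro (v | w) hx
    · exact absurd ⟨v, rfl⟩ hx
    · exact (four_le_ecc_pendant_inr hG hd hsc w)
end
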